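/- Let Q be a finite quiver without edge loops on nonempty vertex set Q0, with Euler matrix E (E i i = 1, and E i j = −(number of arrows i → j) ≤ 0 for i ≠ j), Euler form ⟨x,y⟩ := Σ_{i,j} x i E i j y j, and Cartan form (x,y) := ⟨x,y⟩ + ⟨y,x⟩. Let G_τ(t) ∈ ℚ((t)) denote the normalized Hua series of a nonzero dimension vector τ (defined in the context). Let δ : Q0 → ℕ satisfy condition (∗) for the Cartan form and let d : Q0 → ℕ satisfy supp d ∪ supp δ = Q0. Then for every i ∈ ℕ there exists N ∈ ℕ such that for all n ≥ N, the coefficient of t^i in G_{d+n·δ}(t) equals the coefficient of t^i in (1 − t) · P(t)^{|supp δ|} · ∏_{j ∉ supp δ} φ_{d j}(t)^{−1}, where P(t) = Σ_m p(m) t^m is the partition generating function. -/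

import Mathlib

open Finset

noncomputable section

/-- The bilinear form associated to an integer matrix `E`:
`⟨x, y⟩ = Σ_{i,j} x i * E i j * y j`. -/
def bform {Q0 : Type*} [Fintype Q0] (E : Q0 → Q0 → ℤ) (x y : Q0 → ℤ) : ℤ :=
  ∑ i, ∑ j, x i * E i j * y j

/-- A dimension vector `Q0 → ℕ` viewed as an integer vector. -/
def nvec {Q0 : Type*} (v : Q0 → ℕ) : Q0 → ℤ := fun i => (v i : ℤ)

/-- The variable `t` of `ℚ((t))`. -/
def tls : LaurentSeries ℚ := ((PowerSeries.X : PowerSeries ℚ) : LaurentSeries ℚ)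

/-- `φ_N(t) = ∏_{j=1}^N (1 - t^j)` as an element of `ℚ((t))`. -/
def phiL (N : ℕ) : LaurentSeries ℚ := ∏ j ∈ Finset.Icc 1 N, (1 - tls ^ j)

/-- `φ_v(t) = ∏_{i ∈ Q0} φ_{v i}(t)` for a dimension vector `v`. -/
def phiV {Q0 : Type*} [Fintype Q0] (v : Q0 → ℕ) : LaurentSeries ℚ := ∏ i, phiL (v i)

open Classical in
/-- `K_α(t)`: the sum over all finite componentwise weakly decreasing sequences
`d^1 ≥ d^2 ≥ … ≥ d^s` of nonzero dimension vectors with `Σ d^k = α` of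
`t^{Σ_k ⟨d^k, d^k⟩} / ∏_k φ_{d^k - d^{k+1}}(t)` (with `d^{s+1} = 0`). Such a sequence
is encoded as a componentwise weakly decreasing, eventually zero function
`D : ℕ → Q0 → ℕ` with `Σ_k D k = α`. -/
def Kser {Q0 : Type*} [Fintype Q0] (E : Q0 → Q0 → ℤ) (α : Q0 → ℕ) : LaurentSeries ℚ :=
  ∑ᶠ D : ℕ → Q0 → ℕ,
    if (∀ k i, D (k + 1) i ≤ D k i) ∧ (∃ s : ℕ, ∀ k, s ≤ k → D k = 0) ∧
        (∀ i, ∑ᶠ k, D k i = α i) then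
      tls ^ (∑ᶠ k : ℕ, bform E (nvec (D k)) (nvec (D k))) /
        ∏ᶠ k : ℕ, phiV (fun i => D k i - D (k + 1) i)
    else 0

open Classical in
/-- The inner sum of Hua's formula: the sum over ordered tuples `(α^1, …, α^l)` of nonzero
dimension vectors with `α^1 + … + α^l = τ` of `∏_i K_{α^i}(t)`. -/
def huaInner {Q0 : Type*} [Fintype Q0] (E : Q0 → Q0 → ℤ) (τ : Q0 → ℕ) (l : ℕ) :
    LaurentSeries ℚ :=
  ∑ᶠ A : Fin l → Q0 → ℕ,
    if (∀ k, A k ≠ 0) ∧ (∀ i, ∑ k, A k i = τ i) then ∏ k, Kser E (A k) else 0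

/-- The normalized Hua series
`G_τ(t) = t^{-⟨τ,τ⟩} (1 - t) Σ_{l=1}^{|τ|} ((-1)^{l+1}/l) Σ_{α^1+…+α^l=τ} ∏_i K_{α^i}(t)`.
For an indivisible imaginary root `τ` this equals `Σ_i a_i^{(τ)} t^i` where
`A_τ(q) = Σ_i a_i^{(τ)} q^{1-⟨τ,τ⟩-i}` is the Kac polynomial. -/
def Gser {Q0 : Type*} [Fintype Q0] (E : Q0 → Q0 → ℤ) (τ : Q0 → ℕ) : LaurentSeries ℚ :=
  tls ^ (-bform E (nvec τ) (nvec τ)) * (1 - tls) *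
    ∑ l ∈ Finset.Icc 1 (∑ i, τ i),
      ((-1 : LaurentSeries ℚ) ^ (l + 1) / (l : LaurentSeries ℚ)) * huaInner E τ l

/-- The partition generating function `P(t) = Σ_m p(m) t^m` as an element of `ℚ((t))`. -/
def partGFL : LaurentSeries ℚ :=
  ((PowerSeries.mk fun m => (Nat.card (Nat.Partition m) : ℚ) : PowerSeries ℚ) :
    LaurentSeries ℚ)

end

/-- The underlying simple graph of a quiver with (symmetric Cartan) matrix `C`:
`i` adjacent to `j` iff `i ≠ j` and the pairing is negative. -/
def quivGraph {Q0 : Type*} (C : Q0 → Q0 → ℤ) : SimpleGraph Q0 where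
  Adj i j := i ≠ j ∧ (C i j < 0 ∨ C j i < 0)
  symm := ⟨fun _ _ h => ⟨h.1.symm, h.2.symm⟩⟩
  loopless := ⟨fun _ h => h.1 rfl⟩

/-- The subgraph of `quivGraph C` induced on the support of `δ`. -/
def suppGraph {Q0 : Type*} (C : Q0 → Q0 → ℤ) (δ : Q0 → ℕ) :
    SimpleGraph {i : Q0 // δ i ≠ 0} :=
  (quivGraph C).comap Subtype.val

/-- Condition (∗) for the form given by `C`: `(e_i, δ) < 0` for every vertex `i`, and any
two connected components of the subgraph induced on `supp δ` are at distance at most one,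
i.e. either they are joined by an edge or some vertex is adjacent to both. -/
def condStar {Q0 : Type*} [Fintype Q0] [DecidableEq Q0]
    (C : Q0 → Q0 → ℤ) (δ : Q0 → ℕ) : Prop :=
  (∀ i : Q0, bform C (Pi.single i 1) (nvec δ) < 0) ∧
    ∀ u v : {i : Q0 // δ i ≠ 0},
      (suppGraph C δ).Reachable u v ∨
        ∃ x y : {i : Q0 // δ i ≠ 0},
          (suppGraph C δ).Reachable u x ∧ (suppGraph C δ).Reachable v y ∧
            ((quivGraph C).Adj x.1 y.1 ∨
              ∃ w : Q0, (quivGraph C).Adj w x.1 ∧ (quivGraph C).Adj w y.1)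


/-!
Write `τₙ = d + n • δ`. In Hua's formula for `G_{τₙ}`, the trivial flag `(τₙ)` of the `l = 1`
summand contributes exactly `(1 - t) φ_{τₙ}(t)⁻¹`. Every other contribution (a nontrivial flag,
or a tuple with `l ≥ 2`) comes with a decomposition `τₙ = Σₘ pₘ` into at least two nonzero
pieces, and then `2⟨τₙ,τₙ⟩ - 2 Σₘ ⟨pₘ,pₘ⟩ = Σₘ (pₘ, τₙ - pₘ)`. By (∗) the Cartan pairing
`(x, y)` of a splitting `τₙ = x + y` into nonzero parts tends to `-∞` uniformly: if `x` and `y`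
overlap this follows from a convexity estimate and `(eᵢ, δ) < 0`; if their supports are disjoint,
either one of them is bounded by `d`, or (∗)(b) yields an edge between `supp x` and `supp y` with
an endpoint in `supp δ`. So, after the normalisation by `t^{-⟨τₙ,τₙ⟩}`, all other contributions
have `t`-adic valuation tending to `∞`.
Finally `φ_N(t)⁻¹ ≡ P(t)` modulo `t^{N+1}` by Euler's product for the partition function, and the
entries of `τₙ` tend to `∞` on `supp δ` and equal `d` off it.
-/
noncomputable section

open PowerSeries

namespace AddValuation

variable {R Γ₀ : Type*} [CommRing R] [LinearOrderedAddCommMonoidWithTop Γ₀] (v : AddValuation R Γ₀)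

theorem le_map_finsum {ι : Type*} {f : ι → R} {g : Γ₀} (hf : ∀ i, g ≤ v (f i)) :
    g ≤ v (∑ᶠ i, f i) :=
  finsum_induction (fun x => g ≤ v x) (by simp) (fun _ _ => v.map_le_add) hf

theorem le_map_prod {ι : Type*} (s : Finset ι) {f : ι → R} {g : ι → Γ₀}
    (hf : ∀ i ∈ s, g i ≤ v (f i)) : ∑ i ∈ s, g i ≤ v (∏ i ∈ s, f i) := by
  classical
  induction s using Finset.induction_on with
  | empty => simp
  | insert a s ha ih =>
    rw [sum_insert ha, prod_insert ha, v.map_mul]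
    exact add_le_add (hf a (by simp)) (ih fun i hi => hf i (by simp [hi]))

theorem le_map_prod_sub_prod {ι : Type*} (s : Finset ι) {f g : ι → R} {c : Γ₀}
    (hf : ∀ i ∈ s, 0 ≤ v (f i)) (hg : ∀ i ∈ s, 0 ≤ v (g i))
    (hfg : ∀ i ∈ s, c ≤ v (f i - g i)) : c ≤ v (∏ i ∈ s, f i - ∏ i ∈ s, g i) := by
  classical
  induction s using Finset.induction_on with
  | empty => simp
  | insert a s ha ih =>
    have hprod : 0 ≤ v (∏ i ∈ s, g i) := by
      simpa using v.le_map_prod s fun i hi => hg i (by simp [hi])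
    rw [prod_insert ha, prod_insert ha,
      show f a * ∏ i ∈ s, f i - g a * ∏ i ∈ s, g i =
        f a * (∏ i ∈ s, f i - ∏ i ∈ s, g i) + (f a - g a) * ∏ i ∈ s, g i by ring]
    refine v.map_le_add ?_ ?_ <;> rw [v.map_mul]
    · exact le_add_of_nonneg_of_le (hf a (by simp))
        (ih (fun i hi => hf i (by simp [hi])) (fun i hi => hg i (by simp [hi]))
          fun i hi => hfg i (by simp [hi]))
    · exact le_add_of_le_of_nonneg (hfg a (by simp)) hprod

end AddValuation

theorem HahnSeries.coeff_eq_of_lt_addVal_sub {Γ R : Type*} [AddCancelCommMonoid Γ]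
    [LinearOrder Γ] [IsOrderedCancelAddMonoid Γ] [Ring R] [IsDomain R] {f g : HahnSeries Γ R}
    {i : Γ} (h : (i : WithTop Γ) < HahnSeries.addVal Γ R (f - g)) : f.coeff i = g.coeff i := by
  rw [HahnSeries.addVal_apply] at h
  rw [← sub_eq_zero, ← HahnSeries.coeff_sub]
  exact HahnSeries.coeff_eq_zero_of_lt_orderTop h

theorem Finset.sum_le_of_mem_of_nonpos {ι M : Type*} [AddCommMonoid M] [PartialOrder M]
    [IsOrderedAddMonoid M] {s : Finset ι} {f : ι → M} {a : ι} (ha : a ∈ s)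
    (hf : ∀ i ∈ s, i ≠ a → f i ≤ 0) : ∑ i ∈ s, f i ≤ f a := by
  classical
  rw [← add_sum_erase s f ha]
  exact add_le_of_le_of_nonpos le_rfl
    (sum_nonpos fun i hi => hf i (mem_of_mem_erase hi) (ne_of_mem_erase hi))

namespace HuaStability

local notation "ν" => HahnSeries.addVal ℤ ℚ

/-! ### The `t`-adic valuation on `ℚ((t))` -/

theorem tls_zpow (z : ℤ) : tls ^ z = HahnSeries.single z 1 := by
  have hnat (n : ℕ) : tls ^ n = HahnSeries.single (n : ℤ) 1 := by
    rw [tls, ← map_pow, HahnSeries.ofPowerSeries_X_pow]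
  obtain ⟨n, rfl | rfl⟩ := z.eq_nat_or_neg
  · exact_mod_cast hnat n
  · rw [zpow_neg, zpow_natCast, hnat, inv_eq_of_mul_eq_one_left]
    rw [HahnSeries.single_mul_single, neg_add_cancel, one_mul, HahnSeries.single_zero_one]

theorem addVal_tls_zpow (z : ℤ) : ν (tls ^ z) = z := by
  rw [tls_zpow, HahnSeries.addVal_apply, HahnSeries.orderTop_single one_ne_zero]

theorem tls_ne_zero : tls ≠ 0 :=
  fun h => by simpa [h] using addVal_tls_zpow 1

theorem addVal_coe_nonneg (p : ℚ⟦X⟧) : 0 ≤ ν (p : LaurentSeries ℚ) := by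
  rw [HahnSeries.addVal_apply, HahnSeries.le_orderTop_iff_forall]
  intro j hj
  rw [coeff_coe, if_pos (by exact_mod_cast hj)]

theorem addVal_one_sub_tls : 0 ≤ ν (1 - tls) := by
  have h : (1 : LaurentSeries ℚ) - tls = ((1 - X : ℚ⟦X⟧) : LaurentSeries ℚ) := by
    rw [map_sub, map_one]; rfl
  exact h ▸ addVal_coe_nonneg _

theorem addVal_phiL (N : ℕ) : ν (phiL N) = 0 := by
  refine prod_induction _ (fun f => ν f = 0) (fun _ _ ha hb => by simp [ha, hb])
    (by simp) fun j hj => ?_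
  have hpos : (0 : WithTop ℤ) < ν (tls ^ j) := by
    rw [← zpow_natCast, addVal_tls_zpow]
    exact_mod_cast (mem_Icc.mp hj).1
  rw [AddValuation.map_sub_eq_of_lt_left _ (by simpa using hpos), AddValuation.map_one]

theorem addVal_inv_phiL (N : ℕ) : ν (phiL N)⁻¹ = 0 := by
  rw [AddValuation.map_inv, addVal_phiL, neg_zero]

theorem addVal_phiV {Q0 : Type*} [Fintype Q0] (v : Q0 → ℕ) : ν (phiV v) = 0 :=
  prod_induction _ (fun f => ν f = 0) (fun _ _ ha hb => by simp [ha, hb]) (by simp)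
    fun i _ => addVal_phiL (v i)

/-! ### Euler's product for the partition function -/

theorem X_pow_dvd_inv_one_sub_X_pow_sub_one {N i : ℕ} (h : N ≤ i) :
    (X : ℚ⟦X⟧) ^ (N + 1) ∣ (1 - X ^ (i + 1))⁻¹ - 1 := by
  have hunit : (1 - X ^ (i + 1) : ℚ⟦X⟧)⁻¹ * (1 - X ^ (i + 1)) = 1 :=
    PowerSeries.inv_mul_cancel _ (by simp)
  refine (pow_dvd_pow (X : ℚ⟦X⟧) (show N + 1 ≤ i + 1 by omega)).trans
    ⟨(1 - X ^ (i + 1))⁻¹, ?_⟩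
  linear_combination hunit

open Filter PowerSeries.WithPiTopology in
theorem coeff_prod_range_inv_one_sub_X_pow {m N : ℕ} (h : m ≤ N) :
    coeff m (∏ i ∈ range N, (1 - X ^ (i + 1) : ℚ⟦X⟧)⁻¹) = Nat.card m.Partition := by
  classical
  set f : ℕ → ℚ⟦X⟧ := fun i => (1 - X ^ (i + 1))⁻¹
  have hf : HasProd f (PowerSeries.mk fun n => (Nat.card n.Partition : ℚ)) := by
    have hgeom : f = fun i =>
        if (fun _ => True) (i + 1) then ∑' j : ℕ, X ^ ((i + 1) * j) else 1 := by
      funext i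
      rw [if_pos trivial, eq_comm, PowerSeries.eq_inv_iff_mul_eq_one (by simp)]
      simp_rw [pow_mul]
      exact tsum_pow_mul_one_sub_of_constantCoeff_eq_zero (by simp)
    have hcard (n : ℕ) :
        (Nat.card n.Partition : ℚ) = #(Nat.Partition.restricted n fun _ => True) := by
      simp [Nat.Partition.restricted, Nat.card_eq_fintype_card]
    simpa only [hgeom, hcard] using
      Nat.Partition.hasProd_powerSeriesMk_card_restricted ℚ (fun _ => True)
  -- Beyond `range N` the factors are `≡ 1 mod X ^ (N + 1)`, so coefficient `m` of the partial
  -- products is eventually constant; it must then equal that of the infinite product.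
  have hconst : ∀ᶠ s in atTop, coeff m (∏ i ∈ s, f i) = coeff m (∏ i ∈ range N, f i) := by
    filter_upwards [eventually_ge_atTop (range N)] with s hs
    have htail : X ^ (N + 1) ∣ ∏ i ∈ s \ range N, f i - 1 :=
      prod_induction _ (fun g => X ^ (N + 1) ∣ g - 1)
        (fun a b ha hb => by
          simpa [show a * b - 1 = (a - 1) * b + (b - 1) by ring] using
            dvd_add (dvd_mul_of_dvd_left ha b) hb)
        (by simp) fun i hi =>
          X_pow_dvd_inv_one_sub_X_pow_sub_one (by simpa using (mem_sdiff.mp hi).2)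
    rw [← prod_sdiff hs, ← sub_eq_zero, ← map_sub, ← sub_one_mul]
    exact X_pow_dvd_iff.mp (dvd_mul_of_dvd_left htail _) m (by omega)
  have hlim := (tendsto_iff_coeff_tendsto ℚ _ _ _).mp hf m
  rw [coeff_mk] at hlim
  exact tendsto_nhds_unique (tendsto_const_nhds.congr' (hconst.mono fun _ h => h.symm)) hlim

theorem inv_phiL (N : ℕ) :
    (phiL N)⁻¹ = ((∏ i ∈ range N, (1 - X ^ (i + 1))⁻¹ : ℚ⟦X⟧) : LaurentSeries ℚ) := by
  refine inv_eq_of_mul_eq_one_right ?_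
  rw [phiL, ← Ico_add_one_right_eq_Icc, prod_Ico_eq_prod_range, add_tsub_cancel_right, map_prod,
    ← prod_mul_distrib]
  refine prod_eq_one fun i _ => ?_
  rw [show (1 : LaurentSeries ℚ) - tls ^ (1 + i) = ((1 - X ^ (i + 1) : ℚ⟦X⟧) : LaurentSeries ℚ) by
    simp [tls, add_comm], ← map_mul, PowerSeries.mul_inv_cancel _ (by simp), map_one]

theorem le_addVal_inv_phiL_sub_partGFL (N : ℕ) :
    ((N + 1 : ℤ) : WithTop ℤ) ≤ ν ((phiL N)⁻¹ - partGFL) := by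
  obtain ⟨r, hr⟩ : X ^ (N + 1) ∣ ∏ i ∈ range N, (1 - X ^ (i + 1) : ℚ⟦X⟧)⁻¹ -
      PowerSeries.mk fun m : ℕ => (Nat.card m.Partition : ℚ) := by
    refine X_pow_dvd_iff.mpr fun m hm => ?_
    rw [map_sub, coeff_prod_range_inv_one_sub_X_pow (by omega), coeff_mk, sub_self]
  rw [inv_phiL, partGFL, ← map_sub, hr, map_mul, AddValuation.map_mul, map_pow, ← tls,
    ← zpow_natCast, addVal_tls_zpow]
  exact le_add_of_le_of_nonneg (by push_cast; rfl) (addVal_coe_nonneg r)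

theorem le_addVal_sub_partGFL {Q0 : Type*} [Fintype Q0] (δ d : Q0 → ℕ) (n : ℕ) :
    ((n + 1 : ℤ) : WithTop ℤ) ≤ ν ((1 - tls) * (phiV fun j => d j + n * δ j)⁻¹ -
      (1 - tls) * partGFL ^ (univ.filter fun j => δ j ≠ 0).card *
        ∏ j ∈ univ.filter (fun j => δ j = 0), (phiL (d j))⁻¹) := by
  set S := univ.filter fun j => δ j ≠ 0
  set W := ∏ j ∈ univ.filter (fun j => δ j = 0), (phiL (d j))⁻¹
  have hsplit : (phiV fun j => d j + n * δ j)⁻¹ = (∏ j ∈ S, (phiL (d j + n * δ j))⁻¹) * W := by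
    rw [phiV, ← prod_inv_distrib, ← prod_filter_mul_prod_filter_not univ (fun j => δ j ≠ 0)]
    simp only [ne_eq, not_not]
    exact congrArg _ (prod_congr rfl fun j hj => by rw [(mem_filter.mp hj).2, mul_zero, add_zero])
  have hW : 0 ≤ ν W := by
    have := AddValuation.le_map_prod ν (univ.filter fun j => δ j = 0)
      (f := fun j => (phiL (d j))⁻¹) (g := fun _ => 0) fun j _ => (addVal_inv_phiL (d j)).ge
    rwa [sum_const_zero] at this
  have hdiff : ((n + 1 : ℤ) : WithTop ℤ) ≤
      ν (∏ j ∈ S, (phiL (d j + n * δ j))⁻¹ - ∏ _j ∈ S, partGFL) := by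
    refine AddValuation.le_map_prod_sub_prod ν S (fun j _ => (addVal_inv_phiL _).ge)
      (fun _ _ => addVal_coe_nonneg _) fun j hj => ?_
    refine le_trans ?_ (le_addVal_inv_phiL_sub_partGFL _)
    have : n ≤ d j + n * δ j :=
      le_add_left (Nat.le_mul_of_pos_right n (Nat.pos_of_ne_zero (mem_filter.mp hj).2))
    exact_mod_cast (by omega : n + 1 ≤ d j + n * δ j + 1)
  rw [hsplit, ← prod_const, show ∀ a b : LaurentSeries ℚ, (1 - tls) * (a * W) - (1 - tls) * b * W
      = (1 - tls) * W * (a - b) from fun _ _ => by ring, AddValuation.map_mul,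
    AddValuation.map_mul]
  simpa using add_le_add (add_le_add addVal_one_sub_tls hW) hdiff

/-! ### The Euler form -/

section EulerForm

variable {Q0 : Type*}

theorem nvec_add (u v : Q0 → ℕ) : nvec (u + v) = nvec u + nvec v := by
  funext i; simp [nvec]

theorem nvec_sum {ι : Type*} (s : Finset ι) (p : ι → Q0 → ℕ) :
    nvec (∑ m ∈ s, p m) = ∑ m ∈ s, nvec (p m) := by
  funext i; simp [nvec]

variable [Fintype Q0]

theorem bform_eq_toLinearMap₂' [DecidableEq Q0] (E : Q0 → Q0 → ℤ) (x y : Q0 → ℤ) :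
    bform E x y = Matrix.toLinearMap₂' ℤ (Matrix.of E) x y := by
  simp only [bform, Matrix.toLinearMap₂'_apply, smul_eq_mul, Matrix.of_apply]
  exact sum_congr rfl fun i _ => sum_congr rfl fun j _ => by ring

theorem bform_add_swap (E : Q0 → Q0 → ℤ) (x y : Q0 → ℤ) :
    bform (fun i j => E i j + E j i) x y = bform E x y + bform E y x := by
  simp only [bform, mul_add, add_mul, sum_add_distrib]
  rw [sum_comm (f := fun i j => x i * E j i * y j)]
  simp only [mul_comm, mul_left_comm]

theorem bform_comm {C : Q0 → Q0 → ℤ} (hsymm : ∀ i j, C i j = C j i) (x y : Q0 → ℤ) :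
    bform C x y = bform C y x := by
  rw [bform, sum_comm]
  exact sum_congr rfl fun i _ => sum_congr rfl fun j _ => by rw [hsymm]; ring

theorem bform_single_left [DecidableEq Q0] (C : Q0 → Q0 → ℤ) (i : Q0) (y : Q0 → ℤ) :
    bform C (Pi.single i 1) y = ∑ j, C i j * y j := by
  simp [bform, Pi.single_apply]

theorem sum_bform_sub_add_bform_sub (E : Q0 → Q0 → ℤ) {ι : Type*} (s : Finset ι)
    (P : ι → Q0 → ℤ) :
    ∑ m ∈ s, (bform E (P m) (∑ k ∈ s, P k - P m) + bform E (∑ k ∈ s, P k - P m) (P m)) =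
      2 * bform E (∑ k ∈ s, P k) (∑ k ∈ s, P k) - 2 * ∑ m ∈ s, bform E (P m) (P m) := by
  classical
  simp only [bform_eq_toLinearMap₂', map_sub, LinearMap.sub_apply, sum_add_distrib,
    sum_sub_distrib, ← map_sum, ← LinearMap.sum_apply]
  ring

theorem add_le_sum_bform_of_split_le (E : Q0 → Q0 → ℤ) {τ : Q0 → ℕ} {J : ℤ} (hJ : 0 ≤ J)
    (hsplit : ∀ x y : Q0 → ℕ, x + y = τ → x ≠ 0 → y ≠ 0 →
      bform E (nvec x) (nvec y) + bform E (nvec y) (nvec x) ≤ -(2 * J))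
    {ι : Type*} {s : Finset ι} {p : ι → Q0 → ℕ} (hp : ∑ m ∈ s, p m = τ)
    {m₁ m₂ : ι} (h₁ : m₁ ∈ s) (h₂ : m₂ ∈ s) (hne : m₁ ≠ m₂) (hp₁ : p m₁ ≠ 0) (hp₂ : p m₂ ≠ 0) :
    bform E (nvec τ) (nvec τ) + J ≤ ∑ m ∈ s, bform E (nvec (p m)) (nvec (p m)) := by
  classical
  set rest : ι → Q0 → ℕ := fun m => ∑ k ∈ s.erase m, p k
  have hrest {m : ι} (hm : m ∈ s) : p m + rest m = τ := hp ▸ add_sum_erase s p hm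
  have hrest_ne {m : ι} (hm : m ∈ s) : rest m ≠ 0 := by
    obtain ⟨k, hk, hkm, hpk⟩ : ∃ k ∈ s, k ≠ m ∧ p k ≠ 0 := by
      by_cases h : m = m₁
      · exact ⟨m₂, h₂, h ▸ hne.symm, hp₂⟩
      · exact ⟨m₁, h₁, Ne.symm h, hp₁⟩
    refine fun h0 => hpk (le_antisymm ?_ (by positivity))
    exact h0 ▸ single_le_sum (f := p) (fun _ _ => by positivity) (mem_erase.mpr ⟨hkm, hk⟩)
  set c : ι → ℤ := fun m =>
    bform E (nvec (p m)) (nvec (rest m)) + bform E (nvec (rest m)) (nvec (p m))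
  have hc {m : ι} (hm : m ∈ s) (hpm : p m ≠ 0) : c m ≤ -(2 * J) :=
    hsplit _ _ (hrest hm) hpm (hrest_ne hm)
  have hc_nonpos {m : ι} (hm : m ∈ s) : c m ≤ 0 := by
    by_cases hpm : p m = 0
    · simp [c, hpm, nvec, bform]
    · linarith [hc hm hpm]
  have hsum : ∑ m ∈ s, c m ≤ -(2 * J) := by
    rw [← add_sum_erase s c h₁]
    linarith [hc h₁ hp₁, sum_nonpos (s := s.erase m₁) fun m hm => hc_nonpos (mem_of_mem_erase hm)]
  have hid : ∑ m ∈ s, c m =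
      2 * bform E (nvec τ) (nvec τ) - 2 * ∑ m ∈ s, bform E (nvec (p m)) (nvec (p m)) := by
    have hrest_eq {m : ι} (hm : m ∈ s) : nvec (rest m) = ∑ k ∈ s, nvec (p k) - nvec (p m) := by
      rw [← nvec_sum, hp, ← hrest hm, nvec_add, add_sub_cancel_left]
    calc ∑ m ∈ s, c m
        = ∑ m ∈ s, (bform E (nvec (p m)) (∑ k ∈ s, nvec (p k) - nvec (p m)) +
            bform E (∑ k ∈ s, nvec (p k) - nvec (p m)) (nvec (p m))) :=
          sum_congr rfl fun m hm => by simp only [c, hrest_eq hm]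
      _ = _ := by rw [sum_bform_sub_add_bform_sub, ← nvec_sum, hp]
  linarith

end EulerForm

/-! ### Splittings of `d + n • δ` under condition (∗) -/

theorem sum_sum_mul_le_of_offDiag_nonpos {Q0 K : Type*} [Fintype Q0] [Field K] [LinearOrder K]
    [IsStrictOrderedRing K] {c : Q0 → Q0 → K} (hsymm : ∀ i j, c i j = c j i)
    (hoff : ∀ i j, i ≠ j → c i j ≤ 0) (x y : Q0 → K) (hpos : ∀ j, 0 < x j + y j) :
    ∑ i, ∑ j, x i * c i j * y j ≤
      ∑ j, x j * y j / (x j + y j) * ∑ i, c i j * (x i + y i) := by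
  set T : Q0 → K := fun j => x j + y j
  have hpair (i j : Q0) : x i * c i j * y j + x j * c j i * y i ≤
      x j * y j / T j * (c i j * T i) + x i * y i / T i * (c j i * T j) := by
    have hTi := (hpos i).ne'
    have hTj := (hpos j).ne'
    have hid : x i * c i j * y j + x j * c j i * y i -
        (x j * y j / T j * (c i j * T i) + x i * y i / T i * (c j i * T j)) =
        c i j * ((x i * T j - x j * T i) ^ 2 / (T i * T j)) := by
      simp only [T, hsymm j i]
      field_simp
      ring
    suffices c i j * ((x i * T j - x j * T i) ^ 2 / (T i * T j)) ≤ 0 by linarith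
    rcases eq_or_ne i j with rfl | hij
    · simp
    · exact mul_nonpos_of_nonpos_of_nonneg (hoff i j hij)
        (div_nonneg (sq_nonneg _) (mul_pos (hpos i) (hpos j)).le)
  have hswap : ∑ i, ∑ j, x j * c j i * y i = ∑ i, ∑ j, x i * c i j * y j := sum_comm
  have hswap' : ∑ i, ∑ j, x i * y i / T i * (c j i * T j) =
      ∑ i, ∑ j, x j * y j / T j * (c i j * T i) := sum_comm
  have hcol : ∑ i, ∑ j, x j * y j / T j * (c i j * T i) =
      ∑ j, x j * y j / T j * ∑ i, c i j * T i := by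
    rw [sum_comm]; simp only [mul_sum]
  have := sum_le_sum fun i (_ : i ∈ univ) => sum_le_sum fun j (_ : j ∈ univ) => hpair i j
  simp only [sum_add_distrib] at this
  linarith

section Splitting

variable {Q0 : Type*} [Fintype Q0] {C : Q0 → Q0 → ℤ}

theorem bform_le_of_sum_mul_le {x y : Q0 → ℕ} (hy : y ≠ 0) {R : ℤ} (hR : R ≤ 0)
    (hx : ∀ i, ∑ j, C i j * x j ≤ R) : bform C (nvec y) (nvec x) ≤ R := by
  obtain ⟨i₀, hi₀⟩ := Function.ne_iff.mp hy
  have hterm (i : Q0) : (y i : ℤ) * ∑ j, C i j * x j ≤ y i * R :=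
    mul_le_mul_of_nonneg_left (hx i) (by positivity)
  calc bform C (nvec y) (nvec x) = ∑ i, (y i : ℤ) * ∑ j, C i j * x j := by
        simp only [bform, nvec, mul_sum, mul_assoc]
    _ ≤ (y i₀ : ℤ) * ∑ j, C i₀ j * x j := sum_le_of_mem_of_nonpos (mem_univ i₀)
        fun i _ _ => (hterm i).trans (mul_nonpos_of_nonneg_of_nonpos (by positivity) hR)
    _ ≤ R := by
        have h1 : (1 : ℤ) ≤ y i₀ := by simp only [Pi.zero_apply] at hi₀; omega
        nlinarith [hterm i₀]

theorem two_mul_bform_le_of_overlap (hsymm : ∀ i j, C i j = C j i)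
    (hoff : ∀ i j, i ≠ j → C i j ≤ 0) {x y τ : Q0 → ℕ} (hxy : x + y = τ) (hτ : ∀ j, 0 < τ j)
    {R : ℤ} (hR : R ≤ 0) (hcol : ∀ j, ∑ i, C i j * τ i ≤ R) {j₀ : Q0} (hx₀ : x j₀ ≠ 0)
    (hy₀ : y j₀ ≠ 0) : 2 * bform C (nvec x) (nvec y) ≤ R := by
  have hsum (j : Q0) : (x j : ℚ) + y j = τ j := by exact_mod_cast congrFun hxy j
  set w : Q0 → ℚ := fun j => x j * y j / (x j + y j)
  set r : Q0 → ℚ := fun j => ∑ i, (C i j : ℚ) * (x i + y i)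
  have hr (j : Q0) : r j ≤ R := by
    simp only [r, hsum]; exact_mod_cast hcol j
  have hw (j : Q0) : 0 ≤ w j := by simp only [w]; positivity
  have hw₀ : 1 / 2 ≤ w j₀ := by
    have h1 : (1 : ℚ) ≤ x j₀ := by exact_mod_cast Nat.one_le_iff_ne_zero.mpr hx₀
    have h2 : (1 : ℚ) ≤ y j₀ := by exact_mod_cast Nat.one_le_iff_ne_zero.mpr hy₀
    simp only [w]
    rw [le_div_iff₀ (by positivity)]
    nlinarith
  have hquad := sum_sum_mul_le_of_offDiag_nonpos (c := fun i j => (C i j : ℚ))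
    (fun i j => by exact_mod_cast hsymm i j) (fun i j hij => by exact_mod_cast hoff i j hij)
    (fun j => (x j : ℚ)) (fun j => (y j : ℚ)) (fun j => by rw [hsum]; exact_mod_cast hτ j)
  have hsingle : ∑ j, w j * r j ≤ w j₀ * r j₀ := sum_le_of_mem_of_nonpos (mem_univ j₀)
    fun j _ _ => mul_nonpos_of_nonneg_of_nonpos (hw j) ((hr j).trans (by exact_mod_cast hR))
  have hR' : w j₀ * r j₀ ≤ R / 2 := by
    nlinarith [hr j₀, (show (R : ℚ) ≤ 0 by exact_mod_cast hR)]
  have hcast : (bform C (nvec x) (nvec y) : ℚ) = ∑ i, ∑ j, (x i : ℚ) * C i j * y j := by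
    simp [bform, nvec]
  have : 2 * (bform C (nvec x) (nvec y) : ℚ) ≤ R := by
    rw [hcast]
    linarith
  exact_mod_cast this

theorem bform_le_neg_mul_of_adj (hoff : ∀ i j, i ≠ j → C i j ≤ 0) {x y τ : Q0 → ℕ}
    (hxy : x + y = τ) (hdisj : ∀ j, x j = 0 ∨ y j = 0) {a b : Q0} (hab : C a b ≤ -1)
    (ha : x a ≠ 0) (hb : x b = 0) : bform C (nvec x) (nvec y) ≤ -(τ a * τ b : ℤ) := by
  have hterm (i j : Q0) : (x i : ℤ) * C i j * y j ≤ 0 := by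
    rcases eq_or_ne i j with rfl | hij
    · rcases hdisj i with h | h <;> simp [h]
    · exact mul_nonpos_of_nonpos_of_nonneg
        (mul_nonpos_of_nonneg_of_nonpos (by positivity) (hoff i j hij)) (by positivity)
  have hxa : x a = τ a := by
    have := congrFun hxy a
    rcases hdisj a with h | h
    · exact absurd h ha
    · simpa [h] using this
  have hyb : y b = τ b := by simpa [hb] using congrFun hxy b
  calc bform C (nvec x) (nvec y) = ∑ i, ∑ j, (x i : ℤ) * C i j * y j := rfl
    _ ≤ ∑ j, (x a : ℤ) * C a j * y j :=
        sum_le_of_mem_of_nonpos (mem_univ a) fun i _ _ => sum_nonpos fun j _ => hterm i j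
    _ ≤ (x a : ℤ) * C a b * y b := sum_le_of_mem_of_nonpos (mem_univ b) fun j _ _ => hterm a j
    _ ≤ -(τ a * τ b : ℤ) := by
        rw [hxa, hyb]
        nlinarith [(show (0 : ℤ) ≤ τ a * τ b by positivity)]

theorem sum_mul_le_of_add_eq {δ d : Q0 → ℕ} (hδ : ∀ i, ∑ j, C i j * δ j ≤ -1) {n : ℕ}
    {u w : Q0 → ℕ} (huw : u + w = fun j => d j + n * δ j) (hw : w ≤ d) (i : Q0) :
    ∑ j, C i j * u j ≤ 2 * ∑ i, ∑ j, |C i j| * d j - n := by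
  have hbound {v : Q0 → ℕ} (hv : v ≤ d) : |∑ j, C i j * v j| ≤ ∑ i, ∑ j, |C i j| * d j :=
    calc |∑ j, C i j * v j| ≤ ∑ j, |C i j| * d j := by
          refine (abs_sum_le_sum_abs _ _).trans (sum_le_sum fun j _ => ?_)
          rw [abs_mul, Nat.abs_cast]
          exact mul_le_mul_of_nonneg_left (by exact_mod_cast hv j) (abs_nonneg _)
      _ ≤ ∑ i, ∑ j, |C i j| * d j :=
          single_le_sum (f := fun i => ∑ j, |C i j| * (d j : ℤ))
            (fun _ _ => by positivity) (mem_univ i)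
  have hsplit : ∑ j, C i j * u j =
      ∑ j, C i j * d j + n * ∑ j, C i j * δ j - ∑ j, C i j * w j := by
    rw [mul_sum, ← sum_add_distrib, ← sum_sub_distrib]
    refine sum_congr rfl fun j _ => ?_
    have h : (u j : ℤ) + w j = d j + n * δ j := by exact_mod_cast congrFun huw j
    linear_combination C i j * h
  have hδn : (n : ℤ) * ∑ j, C i j * δ j ≤ -n := by nlinarith [hδ i]
  have h₁ := le_abs_self (∑ j, C i j * (d j : ℤ))
  have h₂ := neg_abs_le (∑ j, C i j * (w j : ℤ))
  linarith [hbound le_rfl, hbound hw]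

variable [DecidableEq Q0] {δ : Q0 → ℕ}

theorem sum_mul_le_neg_one_of_condStar (hδ : condStar C δ) (i : Q0) :
    ∑ j, C i j * δ j ≤ -1 := by
  have := hδ.1 i
  rw [bform_single_left] at this
  exact Int.le_sub_one_of_lt this

theorem exists_adj_mem_notMem_of_condStar (hδ : condStar C δ) {S : Set Q0}
    (h₁ : ∃ j, δ j ≠ 0 ∧ j ∈ S) (h₂ : ∃ j, δ j ≠ 0 ∧ j ∉ S) :
    ∃ a b, (quivGraph C).Adj a b ∧ a ∈ S ∧ b ∉ S ∧ (δ a ≠ 0 ∨ δ b ≠ 0) := by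
  obtain ⟨j₁, hδ₁, hj₁⟩ := h₁
  obtain ⟨j₂, hδ₂, hj₂⟩ := h₂
  by_contra! hcon
  have hclosed {u v : {i : Q0 // δ i ≠ 0}} (huv : (suppGraph C δ).Reachable u v)
      (hu : u.1 ∈ S) : v.1 ∈ S := by
    by_contra hv
    obtain ⟨e, -, he₁, he₂⟩ := huv.some.exists_boundary_dart {w | w.1 ∈ S} hu hv
    exact e.fst.2 (hcon _ _ e.adj he₁ he₂).1
  rcases hδ.2 ⟨j₁, hδ₁⟩ ⟨j₂, hδ₂⟩ with hr | ⟨u, v, hu, hv, hadj | ⟨w, hwu, hwv⟩⟩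
  · exact hj₂ (hclosed hr hj₁)
  all_goals
    have huS : u.1 ∈ S := hclosed hu hj₁
    have hvS : v.1 ∉ S := fun h => hj₂ (hclosed hv.symm h)
  · exact u.2 (hcon _ _ hadj huS hvS).1
  · by_cases hw : w ∈ S
    · exact v.2 (hcon _ _ hwv hw hvS).2
    · exact u.2 (hcon _ _ hwu.symm huS hw).1

theorem bform_le_of_disjoint (hsymm : ∀ i j, C i j = C j i) (hoff : ∀ i j, i ≠ j → C i j ≤ 0)
    (hδ : condStar C δ) {d : Q0 → ℕ} {n : ℕ} (hτ : ∀ j, 0 < d j + n * δ j)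
    (hn : 2 * ∑ i, ∑ j, |C i j| * (d j : ℤ) ≤ n) {x y : Q0 → ℕ}
    (hxy : x + y = fun j => d j + n * δ j) (hx : x ≠ 0) (hy : y ≠ 0)
    (hdisj : ∀ j, x j = 0 ∨ y j = 0) :
    bform C (nvec x) (nvec y) ≤ 2 * ∑ i, ∑ j, |C i j| * (d j : ℤ) - n := by
  have hK : 0 ≤ ∑ i, ∑ j, |C i j| * (d j : ℤ) := by positivity
  have hrow := sum_mul_le_neg_one_of_condStar hδ
  have hle_d {u v : Q0 → ℕ} (huv : u + v = fun j => d j + n * δ j)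
      (hv : ∀ j, δ j ≠ 0 → v j = 0) : v ≤ d := fun j => show v j ≤ d j by
    have := congrFun huv j
    by_cases hj : δ j = 0
    · simp only [Pi.add_apply, hj, mul_zero, add_zero] at this; omega
    · simp [hv j hj]
  by_cases h₁ : ∃ j, δ j ≠ 0 ∧ x j ≠ 0
  · by_cases h₂ : ∃ j, δ j ≠ 0 ∧ x j = 0
    · obtain ⟨a, b, hab, ha, hb, hδab⟩ := exists_adj_mem_notMem_of_condStar hδ
        (S := {j | x j ≠ 0}) (by simpa using h₁) (by simpa using h₂)
      have hCab : C a b ≤ -1 := by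
        rcases hab.2 with h | h
        · omega
        · rw [hsymm]; omega
      have hτab : (n : ℤ) ≤ (d a + n * δ a : ℕ) * (d b + n * δ b : ℕ) := by
        have hτn {j : Q0} (hj : δ j ≠ 0) : (n : ℤ) ≤ (d j + n * δ j : ℕ) := by
          exact_mod_cast le_add_left (Nat.le_mul_of_pos_right n (Nat.pos_of_ne_zero hj))
        have hτa : (1 : ℤ) ≤ (d a + n * δ a : ℕ) := by exact_mod_cast hτ a
        have hτb : (1 : ℤ) ≤ (d b + n * δ b : ℕ) := by exact_mod_cast hτ b
        rcases hδab with h | h <;> nlinarith [hτn h]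
      linarith [bform_le_neg_mul_of_adj hoff hxy hdisj hCab ha (not_not.mp hb)]
    · push Not at h₂
      have hyd : y ≤ d := hle_d hxy fun j hj => (hdisj j).resolve_left (h₂ j hj)
      rw [bform_comm hsymm]
      exact bform_le_of_sum_mul_le hy (by omega) (sum_mul_le_of_add_eq hrow hxy hyd)
  · push Not at h₁
    have hxd : x ≤ d := hle_d ((add_comm y x).trans hxy) h₁
    exact bform_le_of_sum_mul_le hx (by omega)
      (sum_mul_le_of_add_eq hrow ((add_comm y x).trans hxy) hxd)

theorem eventually_bform_split_le (hsymm : ∀ i j, C i j = C j i)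
    (hoff : ∀ i j, i ≠ j → C i j ≤ 0) (hδ : condStar C δ) {d : Q0 → ℕ}
    (hsupp : ∀ i, d i ≠ 0 ∨ δ i ≠ 0) (J : ℤ) :
    ∃ N : ℕ, ∀ n ≥ N, ∀ x y : Q0 → ℕ, x + y = (fun j => d j + n * δ j) → x ≠ 0 → y ≠ 0 →
      bform C (nvec x) (nvec y) ≤ -J := by
  set K : ℤ := ∑ i, ∑ j, |C i j| * d j
  have hK : 0 ≤ K := by positivity
  refine ⟨(2 * K + 2 * |J|).toNat + 1, fun n hn x y hxy hx hy => ?_⟩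
  have hn' : 2 * K + 2 * |J| + 1 ≤ n := by
    have := Int.self_le_toNat (2 * K + 2 * |J|)
    have : (((2 * K + 2 * |J|).toNat + 1 : ℕ) : ℤ) ≤ n := by exact_mod_cast hn
    push_cast at this
    linarith
  have hJ := le_abs_self J
  have hJ₀ := abs_nonneg J
  have hτ (j : Q0) : 0 < d j + n * δ j := by
    rcases hsupp j with h | h
    · exact Nat.add_pos_left (Nat.pos_of_ne_zero h) _
    · exact Nat.add_pos_right _ (Nat.mul_pos (by omega) (Nat.pos_of_ne_zero h))
  by_cases hov : ∃ j, x j ≠ 0 ∧ y j ≠ 0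
  · obtain ⟨j₀, hx₀, hy₀⟩ := hov
    have hcol (j : Q0) : ∑ i, C i j * (d i + n * δ i : ℕ) ≤ 2 * K - n := by
      simpa only [hsymm _ j] using sum_mul_le_of_add_eq (sum_mul_le_neg_one_of_condStar hδ)
        (add_zero _) (fun j => Nat.zero_le (d j)) j
    have := two_mul_bform_le_of_overlap hsymm hoff hxy hτ (by omega) hcol hx₀ hy₀
    omega
  · have hdisj (j : Q0) : x j = 0 ∨ y j = 0 := by
      by_contra! h
      exact hov ⟨j, h⟩
    have := bform_le_of_disjoint hsymm hoff hδ hτ (by omega) hxy hx hy hdisj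
    omega

end Splitting

/-! ### Flags and the series `K_α` -/

section Flags

variable {Q0 : Type*}

def IsFlag (α : Q0 → ℕ) (D : ℕ → Q0 → ℕ) : Prop :=
  (∀ k i, D (k + 1) i ≤ D k i) ∧ (∃ s : ℕ, ∀ k, s ≤ k → D k = 0) ∧ (∀ i, ∑ᶠ k, D k i = α i)

theorem isFlag_single (α : Q0 → ℕ) : IsFlag α (Pi.single 0 α) := by
  refine ⟨fun k i => ?_, ⟨1, fun k hk => by simp [Nat.pos_iff_ne_zero.mp hk]⟩, fun i => ?_⟩
  · rcases Nat.eq_zero_or_pos k with rfl | hk <;> simp [Pi.single_apply]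
  · rw [finsum_eq_single _ 0 fun k hk => by simp [hk]]
    simp

namespace IsFlag

variable {α : Q0 → ℕ} {D : ℕ → Q0 → ℕ}

theorem antitone (hD : IsFlag α D) : Antitone D :=
  antitone_nat_of_succ_le fun k i => hD.1 k i

theorem sum_range {B : ℕ} (hD : IsFlag α D) (hB : ∀ k, B ≤ k → D k = 0) :
    ∑ k ∈ range B, D k = α := by
  funext i
  rw [← hD.2.2 i, Finset.sum_apply]
  refine (finsum_eq_sum_of_support_subset _ fun k hk => ?_).symm
  by_contra hkB
  simp [hB k (by simpa using hkB)] at hk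

theorem eq_single (hD : IsFlag α D) (h₁ : D 1 = 0) : D = Pi.single 0 α := by
  have hzero (k : ℕ) (hk : 1 ≤ k) : D k = 0 :=
    le_antisymm (h₁ ▸ hD.antitone hk) fun _ => Nat.zero_le _
  have h₀ : D 0 = α := by simpa using hD.sum_range (B := 1) hzero
  funext k
  rcases Nat.eq_zero_or_pos k with rfl | hk
  · simp [h₀]
  · simp [hzero k hk, Nat.pos_iff_ne_zero.mp hk]

theorem apply_one_eq_zero (hD : IsFlag α D) (h₀ : D 0 = 0) : D 1 = 0 :=
  le_antisymm (h₀ ▸ hD.antitone zero_le_one) fun _ => Nat.zero_le _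

theorem apply_zero_ne_zero (hD : IsFlag α D) (hα : α ≠ 0) : D 0 ≠ 0 := fun h₀ => hα <| by
  rw [← h₀, hD.eq_single (hD.apply_one_eq_zero h₀), Pi.single_eq_same]

variable [Fintype Q0]

theorem eq_zero_of_sum_le (hD : IsFlag α D) {k : ℕ} (hk : ∑ i, α i ≤ k) : D k = 0 := by
  by_contra hne
  obtain ⟨i₀, hi₀⟩ := Function.ne_iff.mp hne
  obtain ⟨s, hs⟩ := hD.2.1
  have hpos : ∀ k' ∈ range (k + 1), 1 ≤ D k' i₀ := fun k' hk' =>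
    (Nat.one_le_iff_ne_zero.mpr hi₀).trans (hD.antitone (by simpa [Nat.lt_succ_iff] using hk') i₀)
  have hα : k + 1 ≤ α i₀ := by
    rw [← hD.sum_range (B := max s (k + 1)) fun k' hk' => hs k' (le_of_max_le_left hk'),
      Finset.sum_apply]
    simpa using (card_nsmul_le_sum _ _ 1 hpos).trans
      (sum_le_sum_of_subset (range_subset_range.mpr (le_max_right s (k + 1))))
  have := single_le_sum (f := α) (fun _ _ => Nat.zero_le _) (mem_univ i₀)
  omega

theorem le (hD : IsFlag α D) (k : ℕ) : D k ≤ α := by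
  rw [← hD.sum_range (B := max (∑ i, α i) (k + 1))
    fun k' hk' => hD.eq_zero_of_sum_le (le_of_max_le_left hk')]
  exact single_le_sum (f := D) (fun _ _ _ => Nat.zero_le _) (by simp)

end IsFlag

variable [Fintype Q0]

theorem finite_setOf_isFlag (α : Q0 → ℕ) : {D | IsFlag α D}.Finite := by
  classical
  set B := ∑ i, α i
  refine Set.Finite.of_finite_image (f := fun D (k : Fin B) => D k) ?_ fun D₁ h₁ D₂ h₂ h => ?_
  · refine (Set.Finite.pi (t := fun _ => Set.Iic α) fun _ => Set.finite_Iic α).subset ?_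
    rintro _ ⟨D, hD, rfl⟩ k -
    exact hD.le k
  · funext k
    by_cases hk : k < B
    · exact congrFun h ⟨k, hk⟩
    · rw [h₁.eq_zero_of_sum_le (not_lt.mp hk), h₂.eq_zero_of_sum_le (not_lt.mp hk)]

def flagExp (E : Q0 → Q0 → ℤ) (D : ℕ → Q0 → ℕ) : ℤ :=
  ∑ᶠ k, bform E (nvec (D k)) (nvec (D k))

def flagTerm (E : Q0 → Q0 → ℤ) (D : ℕ → Q0 → ℕ) : LaurentSeries ℚ :=
  tls ^ flagExp E D / ∏ᶠ k, phiV (fun i => D k i - D (k + 1) i)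

open Classical in
theorem Kser_eq_finsum (E : Q0 → Q0 → ℤ) (α : Q0 → ℕ) :
    Kser E α = ∑ᶠ D, if IsFlag α D then flagTerm E D else 0 := by
  unfold Kser
  exact finsum_congr fun D => if_congr Iff.rfl rfl rfl

theorem addVal_flagTerm (E : Q0 → Q0 → ℤ) (D : ℕ → Q0 → ℕ) : ν (flagTerm E D) = flagExp E D := by
  have hden : ν (∏ᶠ k, phiV (fun i => D k i - D (k + 1) i)) = 0 :=
    finprod_induction (fun f => ν f = 0) (AddValuation.map_one _)
      (fun _ _ ha hb => by rw [AddValuation.map_mul, ha, hb, add_zero]) fun _ => addVal_phiV _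
  rw [flagTerm, AddValuation.map_div, addVal_tls_zpow, hden, sub_zero]

theorem flagExp_eq_sum_range (E : Q0 → Q0 → ℤ) {D : ℕ → Q0 → ℕ} {B : ℕ}
    (hB : ∀ k, B ≤ k → D k = 0) :
    flagExp E D = ∑ k ∈ range B, bform E (nvec (D k)) (nvec (D k)) := by
  refine finsum_eq_sum_of_support_subset _ fun k hk => ?_
  by_contra hkB
  simp [hB k (by simpa using hkB), nvec, bform] at hk

theorem flagTerm_single (E : Q0 → Q0 → ℤ) (α : Q0 → ℕ) :
    flagTerm E (Pi.single 0 α) = tls ^ bform E (nvec α) (nvec α) * (phiV α)⁻¹ := by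
  have hexp : flagExp E (Pi.single 0 α) = bform E (nvec α) (nvec α) := by
    rw [flagExp, finsum_eq_single _ 0 fun k hk => by simp [hk, nvec, bform]]
    simp
  have hden : ∏ᶠ k, phiV (fun i => Pi.single (M := fun _ : ℕ => Q0 → ℕ) 0 α k i -
      Pi.single (M := fun _ : ℕ => Q0 → ℕ) 0 α (k + 1) i) = phiV α := by
    rw [finprod_eq_single _ 0 fun k hk => by simp [hk, phiV, phiL]]
    simp
  rw [flagTerm, hexp, hden, div_eq_mul_inv]

theorem exists_isFlag_flagExp_le_addVal_Kser (E : Q0 → Q0 → ℤ) (α : Q0 → ℕ) :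
    ∃ D, IsFlag α D ∧ (flagExp E D : WithTop ℤ) ≤ ν (Kser E α) := by
  classical
  obtain ⟨D₀, hD₀, hmin⟩ :=
    Set.exists_min_image _ (flagExp E) (finite_setOf_isFlag α) ⟨_, isFlag_single α⟩
  refine ⟨D₀, hD₀, ?_⟩
  rw [Kser_eq_finsum]
  refine AddValuation.le_map_finsum _ fun D => ?_
  split_ifs with hD
  · rw [addVal_flagTerm]; exact_mod_cast hmin D hD
  · simp

theorem le_addVal_Kser_sub (E : Q0 → Q0 → ℤ) (α : Q0 → ℕ) {c : ℤ}
    (h : ∀ D, IsFlag α D → D ≠ Pi.single 0 α → c ≤ flagExp E D) :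
    (c : WithTop ℤ) ≤ ν (Kser E α - tls ^ bform E (nvec α) (nvec α) * (phiV α)⁻¹) := by
  classical
  have hmain : flagTerm E (Pi.single 0 α) =
      ∑ᶠ D, if D = Pi.single 0 α then flagTerm E D else 0 := by
    rw [finsum_eq_single (fun D => if D = Pi.single 0 α then flagTerm E D else 0) (Pi.single 0 α)
      fun D hD => if_neg hD, if_pos rfl]
  have hfin₁ : (Function.support fun D => if IsFlag α D then flagTerm E D else 0).Finite :=
    (finite_setOf_isFlag α).subset fun D hD => by_contra fun h => hD (if_neg h)
  have hfin₂ : (Function.support fun D =>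
      if D = Pi.single 0 α then flagTerm E D else 0).Finite :=
    (Set.finite_singleton (Pi.single 0 α)).subset fun D hD =>
      Set.mem_singleton_iff.mpr (by_contra fun h => hD (if_neg h))
  rw [Kser_eq_finsum, ← flagTerm_single, hmain, ← finsum_sub_distrib hfin₁ hfin₂]
  refine AddValuation.le_map_finsum _ fun D => ?_
  by_cases hD : D = Pi.single 0 α
  · simp [hD, isFlag_single]
  · rw [if_neg hD, sub_zero]
    split_ifs with hfl
    · rw [addVal_flagTerm]; exact_mod_cast h D hfl hD
    · simp

end Flags

/-! ### Hua's formula -/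

section Hua

variable {Q0 : Type*} [Fintype Q0] (E : Q0 → Q0 → ℤ) {τ : Q0 → ℕ} {J : ℤ}

theorem huaInner_one (hτ : τ ≠ 0) : huaInner E τ 1 = Kser E τ := by
  classical
  rw [huaInner, finsum_eq_single _ (fun _ => τ), if_pos ⟨fun _ => hτ, fun i => by simp⟩]
  · simp
  · intro A hA
    refine if_neg fun ⟨_, hsum⟩ => hA (funext fun k => funext fun i => ?_)
    simpa [Subsingleton.elim k 0] using hsum i

theorem addVal_neg_one_pow_div_natCast_nonneg {l : ℕ} (hl : l ≠ 0) :
    0 ≤ ν ((-1 : LaurentSeries ℚ) ^ (l + 1) / (l : LaurentSeries ℚ)) := by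
  rw [AddValuation.map_div, AddValuation.map_pow, AddValuation.map_neg, AddValuation.map_one,
    ← HahnSeries.single_zero_natCast, HahnSeries.addVal_apply,
    HahnSeries.orderTop_single (Nat.cast_ne_zero.mpr hl)]
  simp

variable (hJ : 0 ≤ J) (hsplit : ∀ x y : Q0 → ℕ, x + y = τ → x ≠ 0 → y ≠ 0 →
  bform E (nvec x) (nvec y) + bform E (nvec y) (nvec x) ≤ -(2 * J))
include hJ hsplit

theorem le_addVal_Kser_sub_of_split :
    ((bform E (nvec τ) (nvec τ) + J : ℤ) : WithTop ℤ) ≤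
      ν (Kser E τ - tls ^ bform E (nvec τ) (nvec τ) * (phiV τ)⁻¹) := by
  refine le_addVal_Kser_sub E τ fun D hD hne => ?_
  have h₁ : D 1 ≠ 0 := fun h => hne (hD.eq_single h)
  have h₀ : D 0 ≠ 0 := fun h => h₁ (hD.apply_one_eq_zero h)
  have hB (k : ℕ) (hk : ∑ i, τ i ≤ k) : D k = 0 := hD.eq_zero_of_sum_le hk
  rw [flagExp_eq_sum_range E hB]
  exact add_le_sum_bform_of_split_le E hJ hsplit (hD.sum_range hB)
    (mem_range.mpr (lt_of_not_ge fun h => h₀ (hB 0 h)))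
    (mem_range.mpr (lt_of_not_ge fun h => h₁ (hB 1 h))) zero_ne_one h₀ h₁

theorem le_addVal_huaInner {l : ℕ} (hl : 2 ≤ l) :
    ((bform E (nvec τ) (nvec τ) + J : ℤ) : WithTop ℤ) ≤ ν (huaInner E τ l) := by
  classical
  refine AddValuation.le_map_finsum _ fun A => ?_
  split_ifs with hA
  swap
  · simp
  obtain ⟨hA₀, hAτ⟩ := hA
  choose D hD hDK using fun k => exists_isFlag_flagExp_le_addVal_Kser E (A k)
  set B := ∑ i, τ i
  have hB (k : Fin l) (m : ℕ) (hm : B ≤ m) : D k m = 0 := by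
    refine (hD k).eq_zero_of_sum_le (le_trans (sum_le_sum fun i _ => ?_) hm)
    exact hAτ i ▸ single_le_sum (f := fun k => A k i) (fun _ _ => Nat.zero_le _) (mem_univ k)
  have hD₀ (k : Fin l) : D k 0 ≠ 0 := (hD k).apply_zero_ne_zero (hA₀ k)
  have hsum : ∑ km ∈ univ ×ˢ range B, D km.1 km.2 = τ := by
    rw [sum_product]
    simp_rw [fun k => (hD k).sum_range (hB k)]
    exact funext fun i => by simpa using hAτ i
  have hexp : ∑ k, flagExp E (D k) =
      ∑ km ∈ univ ×ˢ range B, bform E (nvec (D km.1 km.2)) (nvec (D km.1 km.2)) := by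
    rw [sum_product]
    exact sum_congr rfl fun k _ => flagExp_eq_sum_range E (hB k)
  have hB₀ : 0 < B := lt_of_not_ge fun h => hD₀ ⟨0, by omega⟩ (hB _ 0 h)
  calc ((bform E (nvec τ) (nvec τ) + J : ℤ) : WithTop ℤ) ≤ ((∑ k, flagExp E (D k) : ℤ)) := by
        rw [hexp]
        exact_mod_cast add_le_sum_bform_of_split_le E hJ hsplit hsum
          (m₁ := (⟨0, by omega⟩, 0)) (m₂ := (⟨1, by omega⟩, 0)) (by simpa using hB₀)
          (by simpa using hB₀) (by simp) (hD₀ _) (hD₀ _)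
    _ = ∑ k, (flagExp E (D k) : WithTop ℤ) := by push_cast; rfl
    _ ≤ ν (∏ k, Kser E (A k)) := AddValuation.le_map_prod _ _ fun k _ => hDK k

theorem le_addVal_Gser_sub (hτ : τ ≠ 0) :
    (J : WithTop ℤ) ≤ ν (Gser E τ - (1 - tls) * (phiV τ)⁻¹) := by
  set q := bform E (nvec τ) (nvec τ)
  set c : ℕ → LaurentSeries ℚ := fun l => (-1) ^ (l + 1) / (l : LaurentSeries ℚ)
  have h₁ : 1 ∈ Icc 1 (∑ i, τ i) := by
    obtain ⟨i, hi⟩ := Function.ne_iff.mp hτ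
    exact mem_Icc.mpr ⟨le_rfl, (Nat.one_le_iff_ne_zero.mpr hi).trans
      (single_le_sum (fun _ _ => Nat.zero_le _) (mem_univ i))⟩
  have hq : tls ^ (-q) * tls ^ q = 1 := by rw [← zpow_add₀ tls_ne_zero, neg_add_cancel, zpow_zero]
  have hdecomp : Gser E τ - (1 - tls) * (phiV τ)⁻¹ = tls ^ (-q) * (1 - tls) *
      ((Kser E τ - tls ^ q * (phiV τ)⁻¹) +
        ∑ l ∈ (Icc 1 (∑ i, τ i)).erase 1, c l * huaInner E τ l) := by
    rw [Gser, ← add_sum_erase _ _ h₁, huaInner_one E hτ]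
    simp only [c]
    linear_combination ((1 - tls) * (phiV τ)⁻¹) * hq
  have hrest : ((q + J : ℤ) : WithTop ℤ) ≤ ν ((Kser E τ - tls ^ q * (phiV τ)⁻¹) +
      ∑ l ∈ (Icc 1 (∑ i, τ i)).erase 1, c l * huaInner E τ l) := by
    refine AddValuation.map_le_add _ (le_addVal_Kser_sub_of_split E hJ hsplit)
      (AddValuation.map_le_sum _ fun l hl => ?_)
    obtain ⟨hl₁, hl⟩ := mem_erase.mp hl
    rw [AddValuation.map_mul]
    exact le_add_of_nonneg_of_le
      (addVal_neg_one_pow_div_natCast_nonneg (by have := (mem_Icc.mp hl).1; omega))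
      (le_addVal_huaInner E hJ hsplit (by have := (mem_Icc.mp hl).1; omega))
  rw [hdecomp, AddValuation.map_mul, AddValuation.map_mul, addVal_tls_zpow]
  calc (J : WithTop ℤ) = ((-q : ℤ) : WithTop ℤ) + 0 + ((q + J : ℤ) : WithTop ℤ) := by
        norm_cast; ring
    _ ≤ _ := add_le_add (add_le_add le_rfl addVal_one_sub_tls) hrest

end Hua

end HuaStability

end

open HuaStability in
theorem hua_coeff_stabilizes_general
    {Q0 : Type*} [Fintype Q0] [DecidableEq Q0] [Nonempty Q0]
    (E : Q0 → Q0 → ℤ) (hoff : ∀ i j, i ≠ j → E i j ≤ 0)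
    (δ : Q0 → ℕ) (hδ : condStar (fun i j => E i j + E j i) δ)
    (d : Q0 → ℕ) (hsupp : ∀ i, d i ≠ 0 ∨ δ i ≠ 0) :
    ∀ i : ℕ, ∃ N : ℕ, ∀ n ≥ N,
      (Gser E fun j => d j + n * δ j).coeff (i : ℤ) =
        ((1 - tls) * partGFL ^ (Finset.univ.filter fun j => δ j ≠ 0).card *
            ∏ j ∈ Finset.univ.filter (fun j => δ j = 0), (phiL (d j))⁻¹).coeff (i : ℤ) := by
  intro i
  obtain ⟨N, hN⟩ := eventually_bform_split_le (fun a b => add_comm _ _)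
    (fun a b h => add_nonpos (hoff a b h) (hoff b a h.symm)) hδ hsupp (2 * (i + 1))
  refine ⟨max N (i + 1), fun n hn => HahnSeries.coeff_eq_of_lt_addVal_sub ?_⟩
  have hτ : (fun j => d j + n * δ j) ≠ 0 := by
    obtain ⟨j⟩ := ‹Nonempty Q0›
    refine Function.ne_iff.mpr ⟨j, ?_⟩
    rcases hsupp j with h | h
    · simp [h]
    · simp [h]; omega
  have hG := le_addVal_Gser_sub E (J := i + 1) (by positivity)
    (fun x y hxy hx hy => (bform_add_swap E _ _).symm.trans_le
      (hN n (le_of_max_le_left hn) x y hxy hx hy)) hτ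
  have hP := le_addVal_sub_partGFL δ d n
  rw [← sub_add_sub_cancel _ ((1 - tls) * (phiV fun j => d j + n * δ j)⁻¹)]
  refine lt_of_lt_of_le ?_ (AddValuation.map_le_add _ hG (le_trans ?_ hP))
  · exact_mod_cast lt_add_one (i : ℤ)
  · exact_mod_cast (by omega : i + 1 ≤ n + 1)

/-- Theorem 4.4 at the level of Hua's formula: for a quiver without loops with Euler
matrix `E`, `δ` satisfying (∗) for the Cartan form `C = E + Eᵀ` and `d` with
`supp d ∪ supp δ = Q0`, every coefficient of the normalized Hua series `G_{d+nδ}(t)`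
eventually equals the corresponding coefficient of
`(1 - t) P(t)^{|supp δ|} ∏_{j ∉ supp δ} φ_{d_j}(t)⁻¹`. -/
theorem hua_coeff_stabilizes
    {Q0 : Type*} [Fintype Q0] [DecidableEq Q0] [Nonempty Q0]
    (E : Q0 → Q0 → ℤ) (hdiag : ∀ i, E i i = 1) (hoff : ∀ i j, i ≠ j → E i j ≤ 0)
    (δ : Q0 → ℕ) (hδ : condStar (fun i j => E i j + E j i) δ)
    (d : Q0 → ℕ) (hsupp : ∀ i, d i ≠ 0 ∨ δ i ≠ 0) :
    ∀ i : ℕ, ∃ N : ℕ, ∀ n ≥ N,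
      (Gser E fun j => d j + n * δ j).coeff (i : ℤ) =
        ((1 - tls) * partGFL ^ (Finset.univ.filter fun j => δ j ≠ 0).card *
            ∏ j ∈ Finset.univ.filter (fun j => δ j = 0), (phiL (d j))⁻¹).coeff (i : ℤ) :=
  hua_coeff_stabilizes_general E hoff δ hδ d hsupp
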